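/- For real numbers x, y and p ≥ 2, ((|x+y|^p + |x-y|^p)/2)^{2/p} ≤ x^2 + (p-1) y^2. -/

import Mathlib

/-!
By homogeneity and the symmetries `x ↔ y`, `t ↔ -t`, it suffices to prove
`((1 + t) ^ p + (1 - t) ^ p) / 2 ≤ (1 + (p - 1) t ^ 2) ^ (p / 2)` for `0 ≤ t ≤ 1`.
The two sides and their first derivatives agree at `t = 0`, so comparing derivatives twice
reduces this to the second-order bound `((1 + t) ^ (p - 2) + (1 - t) ^ (p - 2)) / 2 ≤
(1 + (p - 1) ^ 2 t ^ 2) (1 + (p - 1) t ^ 2) ^ (p / 2 - 2)`.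
For `p ≤ 4` this follows from the power-mean bound `((1 + t) ^ r + (1 - t) ^ r) / 2 ≤
(1 + t ^ 2) ^ (r / 2)` (`r ≤ 2`) and weighted AM-GM; for `p ≥ 4` it follows from the inequality
itself at exponent `p - 2`, which closes an induction on `⌈p / 2⌉`.
-/

open Real Set

noncomputable def twoPointMean (r t : ℝ) : ℝ := ((1 + t) ^ r + (1 - t) ^ r) / 2

noncomputable def twoPointDiff (r t : ℝ) : ℝ := ((1 + t) ^ r - (1 - t) ^ r) / 2

section Deriv

variable {r : ℝ}

lemma hasDerivAt_one_add_rpow (hr : 1 ≤ r) (t : ℝ) :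
    HasDerivAt (fun t ↦ (1 + t) ^ r) (r * (1 + t) ^ (r - 1)) t := by
  simpa using ((hasDerivAt_id t).const_add 1).rpow_const (Or.inr hr)

lemma hasDerivAt_one_sub_rpow (hr : 1 ≤ r) (t : ℝ) :
    HasDerivAt (fun t ↦ (1 - t) ^ r) (-(r * (1 - t) ^ (r - 1))) t := by
  simpa using ((hasDerivAt_id t).const_sub 1).rpow_const (Or.inr hr)

lemma hasDerivAt_twoPointMean (hr : 1 ≤ r) (t : ℝ) :
    HasDerivAt (twoPointMean r) (r * twoPointDiff (r - 1) t) t := by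
  refine (((hasDerivAt_one_add_rpow hr t).add (hasDerivAt_one_sub_rpow hr t)).div_const 2
    ).congr_deriv ?_
  unfold twoPointDiff
  ring

lemma hasDerivAt_twoPointDiff (hr : 1 ≤ r) (t : ℝ) :
    HasDerivAt (twoPointDiff r) (r * twoPointMean (r - 1) t) t := by
  refine (((hasDerivAt_one_add_rpow hr t).sub (hasDerivAt_one_sub_rpow hr t)).div_const 2
    ).congr_deriv ?_
  unfold twoPointMean
  ring

lemma hasDerivAt_one_add_mul_sq_rpow {c : ℝ} (hc : 0 ≤ c) (q t : ℝ) :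
    HasDerivAt (fun t ↦ (1 + c * t ^ 2) ^ q) (2 * c * q * t * (1 + c * t ^ 2) ^ (q - 1)) t := by
  have hpos : 0 < 1 + c * t ^ 2 := by positivity
  convert (((hasDerivAt_pow 2 t).const_mul c).const_add 1).rpow_const (Or.inl hpos.ne') using 1
  push_cast
  ring

end Deriv

def TwoPointBound (p : ℝ) : Prop :=
  ∀ t ∈ Icc (0 : ℝ) 1, twoPointMean p t ≤ (1 + (p - 1) * t ^ 2) ^ (p / 2)

def TwoPointSecondOrderBound (p : ℝ) : Prop :=
  ∀ t ∈ Icc (0 : ℝ) 1,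
    twoPointMean (p - 2) t ≤ (1 + (p - 1) ^ 2 * t ^ 2) * (1 + (p - 1) * t ^ 2) ^ (p / 2 - 2)

section Comparison

variable {p : ℝ}

lemma twoPointDiff_le_of_twoPointSecondOrderBound (hp : 2 ≤ p) (h : TwoPointSecondOrderBound p)
    {t : ℝ} (ht : t ∈ Icc (0 : ℝ) 1) :
    twoPointDiff (p - 1) t ≤ (p - 1) * t * (1 + (p - 1) * t ^ 2) ^ (p / 2 - 1) := by
  have hp1 : 1 ≤ p - 1 := by linarith
  have hK : ∀ x, HasDerivAt (fun x ↦ (p - 1) * x * (1 + (p - 1) * x ^ 2) ^ (p / 2 - 1))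
      ((p - 1) * ((1 + (p - 1) ^ 2 * x ^ 2) * (1 + (p - 1) * x ^ 2) ^ (p / 2 - 2))) x := by
    intro x
    have hu : 0 < 1 + (p - 1) * x ^ 2 := by nlinarith [sq_nonneg x]
    refine (((hasDerivAt_id x).const_mul (p - 1)).mul
      (hasDerivAt_one_add_mul_sq_rpow (by linarith) (p / 2 - 1) x)).congr_deriv ?_
    rw [show p / 2 - 1 - 1 = p / 2 - 2 by ring, show p / 2 - 1 = p / 2 - 2 + 1 by ring,
      rpow_add_one hu.ne']
    simp only [id]
    ring
  refine image_le_of_deriv_right_le_deriv_boundary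
    (fun x _ ↦ (hasDerivAt_twoPointDiff hp1 x).continuousAt.continuousWithinAt)
    (fun x _ ↦ (hasDerivAt_twoPointDiff hp1 x).hasDerivWithinAt) ?_
    (fun x _ ↦ (hK x).continuousAt.continuousWithinAt) (fun x _ ↦ (hK x).hasDerivWithinAt) ?_ ht
  · simp [twoPointDiff]
  · intro x hx
    rw [show p - 1 - 1 = p - 2 by ring]
    exact mul_le_mul_of_nonneg_left (h x (Ico_subset_Icc_self hx)) (by linarith)

lemma twoPointBound_of_twoPointSecondOrderBound (hp : 2 ≤ p) (h : TwoPointSecondOrderBound p) :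
    TwoPointBound p := by
  have hG : ∀ x, HasDerivAt (fun x ↦ (1 + (p - 1) * x ^ 2) ^ (p / 2))
      (p * ((p - 1) * x * (1 + (p - 1) * x ^ 2) ^ (p / 2 - 1))) x := fun x ↦
    (hasDerivAt_one_add_mul_sq_rpow (by linarith) (p / 2) x).congr_deriv (by ring)
  refine fun t ht ↦ image_le_of_deriv_right_le_deriv_boundary
    (fun x _ ↦ (hasDerivAt_twoPointMean (by linarith) x).continuousAt.continuousWithinAt)
    (fun x _ ↦ (hasDerivAt_twoPointMean (by linarith) x).hasDerivWithinAt) ?_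
    (fun x _ ↦ (hG x).continuousAt.continuousWithinAt) (fun x _ ↦ (hG x).hasDerivWithinAt) ?_ ht
  · simp [twoPointMean]
  · intro x hx
    exact mul_le_mul_of_nonneg_left
      (twoPointDiff_le_of_twoPointSecondOrderBound hp h (Ico_subset_Icc_self hx)) (by linarith)

end Comparison

lemma sq_rpow_div_two {s : ℝ} (hs : 0 ≤ s) (r : ℝ) : (s ^ 2) ^ (r / 2) = s ^ r := by
  rw [← rpow_natCast_mul hs, Nat.cast_ofNat, mul_div_cancel₀ r two_ne_zero]

lemma twoPointMean_le_one_add_sq_rpow {r t : ℝ} (hr₀ : 0 ≤ r) (hr₂ : r ≤ 2)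
    (ht : t ∈ Icc (-1 : ℝ) 1) : twoPointMean r t ≤ (1 + t ^ 2) ^ (r / 2) := by
  have hconc := (concaveOn_rpow (p := r / 2) (by linarith) (by linarith)).2
    (mem_Ici.2 (sq_nonneg (1 + t))) (mem_Ici.2 (sq_nonneg (1 - t)))
    (by norm_num : (0 : ℝ) ≤ 1 / 2) (by norm_num : (0 : ℝ) ≤ 1 / 2) (by norm_num)
  simp only [smul_eq_mul] at hconc
  rw [sq_rpow_div_two (by linarith [ht.1]), sq_rpow_div_two (by linarith [ht.2])] at hconc
  calc twoPointMean r t = 1 / 2 * (1 + t) ^ r + 1 / 2 * (1 - t) ^ r := by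
        unfold twoPointMean; ring
    _ ≤ (1 / 2 * (1 + t) ^ 2 + 1 / 2 * (1 - t) ^ 2) ^ (r / 2) := hconc
    _ = (1 + t ^ 2) ^ (r / 2) := by ring_nf

section SecondOrder

variable {p : ℝ}

lemma twoPointSecondOrderBound_of_le_four (hp₂ : 2 ≤ p) (hp₄ : p ≤ 4) :
    TwoPointSecondOrderBound p := by
  intro t ht
  have hu : 0 < 1 + (p - 1) * t ^ 2 := by nlinarith [sq_nonneg t]
  have hamgm := geom_mean_le_arith_mean2_weighted (w₁ := p / 2 - 1) (w₂ := 2 - p / 2)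
    (p₁ := 1 + t ^ 2) (p₂ := 1 + (p - 1) * t ^ 2) (by linarith) (by linarith) (by positivity)
    hu.le (by ring)
  have hpoly : (p / 2 - 1) * (1 + t ^ 2) + (2 - p / 2) * (1 + (p - 1) * t ^ 2)
      ≤ 1 + (p - 1) ^ 2 * t ^ 2 := by
    nlinarith [mul_nonneg (mul_nonneg (by linarith : 0 ≤ 3 * p - 4) (by linarith : 0 ≤ p - 2))
      (sq_nonneg t)]
  calc twoPointMean (p - 2) t ≤ (1 + t ^ 2) ^ ((p - 2) / 2) :=
        twoPointMean_le_one_add_sq_rpow (by linarith) (by linarith) ⟨by linarith [ht.1], ht.2⟩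
    _ = (1 + t ^ 2) ^ (p / 2 - 1) * (1 + (p - 1) * t ^ 2) ^ (2 - p / 2)
          * (1 + (p - 1) * t ^ 2) ^ (p / 2 - 2) := by
        rw [mul_assoc, ← rpow_add hu, show 2 - p / 2 + (p / 2 - 2) = 0 by ring, rpow_zero,
          mul_one]
        ring_nf
    _ ≤ ((p / 2 - 1) * (1 + t ^ 2) + (2 - p / 2) * (1 + (p - 1) * t ^ 2))
          * (1 + (p - 1) * t ^ 2) ^ (p / 2 - 2) :=
        mul_le_mul_of_nonneg_right hamgm (rpow_nonneg hu.le _)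
    _ ≤ (1 + (p - 1) ^ 2 * t ^ 2) * (1 + (p - 1) * t ^ 2) ^ (p / 2 - 2) :=
        mul_le_mul_of_nonneg_right hpoly (rpow_nonneg hu.le _)

lemma twoPointSecondOrderBound_of_twoPointBound (hp : 4 ≤ p) (h : TwoPointBound (p - 2)) :
    TwoPointSecondOrderBound p := by
  intro t ht
  have hu : 0 < 1 + (p - 1) * t ^ 2 := by nlinarith [sq_nonneg t]
  calc twoPointMean (p - 2) t ≤ (1 + (p - 2 - 1) * t ^ 2) ^ ((p - 2) / 2) := h t ht
    _ ≤ (1 + (p - 1) * t ^ 2) ^ ((p - 2) / 2) :=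
        rpow_le_rpow (by nlinarith [sq_nonneg t]) (by nlinarith [sq_nonneg t]) (by linarith)
    _ = (1 + (p - 1) * t ^ 2) * (1 + (p - 1) * t ^ 2) ^ (p / 2 - 2) := by
        rw [show (p - 2) / 2 = p / 2 - 2 + 1 by ring, rpow_add_one hu.ne', mul_comm]
    _ ≤ (1 + (p - 1) ^ 2 * t ^ 2) * (1 + (p - 1) * t ^ 2) ^ (p / 2 - 2) := by
        refine mul_le_mul_of_nonneg_right ?_ (rpow_nonneg hu.le _)
        nlinarith [mul_nonneg (mul_nonneg (by linarith : 0 ≤ p - 1) (by linarith : 0 ≤ p - 2))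
          (sq_nonneg t)]

end SecondOrder

lemma twoPointBound_of_two_le {p : ℝ} (hp : 2 ≤ p) : TwoPointBound p := by
  obtain ⟨n, hn⟩ := exists_nat_ge (p / 2)
  induction n generalizing p with
  | zero => simp only [CharP.cast_eq_zero] at hn; linarith
  | succ n ih =>
    refine twoPointBound_of_twoPointSecondOrderBound hp ?_
    rcases le_total p 4 with h₄ | h₄
    · exact twoPointSecondOrderBound_of_le_four hp h₄
    · exact twoPointSecondOrderBound_of_twoPointBound h₄
        (ih (by linarith) (by push_cast at hn; linarith))

lemma twoPointMean_neg (r t : ℝ) : twoPointMean r (-t) = twoPointMean r t := by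
  rw [twoPointMean, twoPointMean, ← sub_eq_add_neg, sub_neg_eq_add, add_comm ((1 - t) ^ r)]

lemma twoPointMean_le_of_abs_le {p t : ℝ} (hp : 2 ≤ p) (ht : |t| ≤ 1) :
    twoPointMean p t ≤ (1 + (p - 1) * t ^ 2) ^ (p / 2) := by
  rcases le_total 0 t with h₀ | h₀
  · exact twoPointBound_of_two_le hp t ⟨h₀, (abs_le.1 ht).2⟩
  · simpa only [twoPointMean_neg, neg_sq] using
      twoPointBound_of_two_le hp (-t) ⟨neg_nonneg.2 h₀, by linarith [(abs_le.1 ht).1]⟩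

lemma abs_add_rpow_add_abs_sub_rpow_le {p x y : ℝ} (hp : 2 ≤ p) (hyx : |y| ≤ |x|) :
    (|x + y| ^ p + |x - y| ^ p) / 2 ≤ (x ^ 2 + (p - 1) * y ^ 2) ^ (p / 2) := by
  rcases eq_or_ne x 0 with rfl | hx
  · obtain rfl : y = 0 := abs_nonpos_iff.1 (by simpa using hyx)
    simp [zero_rpow (by linarith : p ≠ 0), zero_rpow (by linarith : p / 2 ≠ 0)]
  set t := y / x
  have ht : |t| ≤ 1 := by
    rw [abs_div]
    exact div_le_one_of_le₀ hyx (abs_nonneg x)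
  have hy : y = x * t := (mul_div_cancel₀ y hx).symm
  have ht₁ : 0 ≤ 1 + t := by linarith [(abs_le.1 ht).1]
  have ht₂ : 0 ≤ 1 - t := by linarith [(abs_le.1 ht).2]
  have hplus : |x + y| = |x| * (1 + t) := by
    rw [hy, ← mul_one_add, abs_mul, abs_of_nonneg ht₁]
  have hminus : |x - y| = |x| * (1 - t) := by
    rw [hy, ← mul_one_sub, abs_mul, abs_of_nonneg ht₂]
  have hgauss : x ^ 2 + (p - 1) * y ^ 2 = |x| ^ 2 * (1 + (p - 1) * t ^ 2) := by
    rw [hy, sq_abs]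
    ring
  rw [hplus, hminus, hgauss, mul_rpow (abs_nonneg x) ht₁, mul_rpow (abs_nonneg x) ht₂,
    mul_rpow (sq_nonneg _) (by nlinarith [sq_nonneg t]), sq_rpow_div_two (abs_nonneg x)]
  calc (|x| ^ p * (1 + t) ^ p + |x| ^ p * (1 - t) ^ p) / 2 = |x| ^ p * twoPointMean p t := by
        unfold twoPointMean; ring
    _ ≤ |x| ^ p * (1 + (p - 1) * t ^ 2) ^ (p / 2) :=
        mul_le_mul_of_nonneg_left (twoPointMean_le_of_abs_le hp ht) (by positivity)

theorem two_point_inequality (x y p : ℝ) (hp : 2 ≤ p) :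
    ((|x + y| ^ p + |x - y| ^ p) / 2) ^ (2 / p) ≤ x ^ 2 + (p - 1) * y ^ 2 := by
  have hR : 0 ≤ x ^ 2 + (p - 1) * y ^ 2 := by nlinarith [sq_nonneg x, sq_nonneg y]
  have hmean : (|x + y| ^ p + |x - y| ^ p) / 2 ≤ (x ^ 2 + (p - 1) * y ^ 2) ^ (p / 2) := by
    rcases le_total |y| |x| with h | h
    · exact abs_add_rpow_add_abs_sub_rpow_le hp h
    · calc (|x + y| ^ p + |x - y| ^ p) / 2 = (|y + x| ^ p + |y - x| ^ p) / 2 := by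
            rw [add_comm y, abs_sub_comm]
        _ ≤ (y ^ 2 + (p - 1) * x ^ 2) ^ (p / 2) := abs_add_rpow_add_abs_sub_rpow_le hp h
        _ ≤ (x ^ 2 + (p - 1) * y ^ 2) ^ (p / 2) := by
            refine rpow_le_rpow (by nlinarith [sq_nonneg x, sq_nonneg y]) ?_ (by linarith)
            nlinarith [mul_le_mul_of_nonneg_left (sq_le_sq.2 h) (by linarith : 0 ≤ p - 2)]
  calc ((|x + y| ^ p + |x - y| ^ p) / 2) ^ (2 / p)
      ≤ ((x ^ 2 + (p - 1) * y ^ 2) ^ (p / 2)) ^ (2 / p) :=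
        rpow_le_rpow (by positivity) hmean (by positivity)
    _ = x ^ 2 + (p - 1) * y ^ 2 := by
        rw [← rpow_mul hR, show p / 2 * (2 / p) = 1 by field_simp, rpow_one]
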